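/- Complete graph linking into a line: let S consist of a simple line with n_L nodes and a complete graph with n_G ≥ 2 nodes, with node 1 of the complete graph additionally linking to node j of the line. Then the PageRank of line node i is R_i = (1-c^{n_L-i+1})/(1-c) + b_{ij} with b_{ij} = c^{j+1-i}(c + n_G - 1)/(n_G(n_G-1) - n_G(n_G-2)c - (n_G-1)c²) for j ≥ i and b_{ij} = 0 for j < i; the linking graph node has PageRank (n_G(n_G-1)+n_G c)/(n_G(n_G-1)-(n_G-1)c²-n_G(n_G-2)c) and each other graph node has PageRank ((c+n_G)(n_G-1))/(n_G(n_G-1)-(n_G-1)c²-n_G(n_G-2)c). -/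

import Mathlib

/-!
`R` is the unique solution of `(1 - c Aᵀ) R = 1`: the matrix is invertible because `A` is
nonnegative with row sums at most `1` and `c < 1`, which makes it strictly diagonally dominant
by columns. So it suffices to check the balance equation `R p = 1 + c ∑ₛ A s p * R s` at every
node. On the complete graph this is a `2 × 2` linear system for the value at the linking node
and the common value at the other graph nodes. Along the line, the geometric part
`(1 - c ^ (nL - p)) / (1 - c)` satisfies `g p = 1 + c g (p + 1)` with `g nL = 0`, and the
remaining term `c ^ (j - p) (c + nG - 1) / D` is the contribution `c R_hub / nG` that the linking
node sends to line index `j - 1`, damped by a factor `c` per step down the line.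
-/

open Matrix Finset

namespace Matrix

variable {n : Type*} [Fintype n] [DecidableEq n]

theorem det_one_sub_smul_transpose_ne_zero (A : Matrix n n ℝ) (hA₀ : ∀ i j, 0 ≤ A i j)
    (hA₁ : ∀ i, ∑ j, A i j ≤ 1) {c : ℝ} (hc₀ : 0 ≤ c) (hc₁ : c < 1) :
    (1 - c • Aᵀ).det ≠ 0 := by
  refine det_ne_zero_of_sum_col_lt_diag fun k => ?_
  have hdiag_le : A k k ≤ 1 := (single_le_sum (fun j _ => hA₀ k j) (mem_univ k)).trans (hA₁ k)
  have hoff : ∀ i ∈ univ.erase k, ‖(1 - c • Aᵀ) i k‖ = c * A k i := fun i hi => by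
    rw [sub_apply, one_apply_ne (ne_of_mem_erase hi), smul_apply, transpose_apply, smul_eq_mul,
      zero_sub, norm_neg, Real.norm_of_nonneg (mul_nonneg hc₀ (hA₀ k i))]
  have hdiag : ‖(1 - c • Aᵀ) k k‖ = 1 - c * A k k := by
    rw [sub_apply, one_apply_eq, smul_apply, transpose_apply, smul_eq_mul,
      Real.norm_of_nonneg (by nlinarith)]
  rw [sum_congr rfl hoff, ← mul_sum, hdiag]
  have hrow := add_sum_erase univ (A k) (mem_univ k)
  nlinarith [mul_le_mul_of_nonneg_left (hA₁ k) hc₀]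

theorem one_sub_smul_transpose_mulVec_apply (A : Matrix n n ℝ) (c : ℝ) (w : n → ℝ) (r : n) :
    ((1 - c • Aᵀ) *ᵥ w) r = w r - c * ∑ s, A s r * w s := by
  simp [sub_mulVec, smul_mulVec, mulVec_transpose, vecMul, dotProduct, mul_comm]

end Matrix

theorem Finset.sum_range_add_succ {M : Type*} [AddCommMonoid M] (f : ℕ → M) (n k : ℕ) :
    ∑ s ∈ range (n + (k + 1)), f s =
      ∑ s ∈ range n, f s + f n + ∑ t ∈ range k, f (n + 1 + t) := by
  rw [sum_range_add, sum_range_succ', add_zero, add_assoc, add_comm (∑ t ∈ range k, _)]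
  simp only [add_assoc, add_comm 1]

noncomputable section

namespace LineCompleteGraph

variable (nL nG j : ℕ) (c : ℝ)

def link (r s : ℕ) : ℝ :=
  if r < nL then (if r = s + 1 then 1 else 0)
  else if r = nL then (if s + 1 = j ∨ nL < s then 1 / (nG : ℝ) else 0)
  else if nL ≤ s ∧ s ≠ r then 1 / ((nG : ℝ) - 1) else 0

def denom : ℝ := nG * (nG - 1) - (nG - 1) * c ^ 2 - nG * (nG - 2) * c

def hubRank : ℝ := (nG * (nG - 1) + nG * c) / denom nG c

def cliqueRank : ℝ := ((c + nG) * (nG - 1)) / denom nG c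

def lineRank (s : ℕ) : ℝ :=
  (1 - c ^ (nL - s)) / (1 - c) + if s + 1 ≤ j then c ^ (j - s) * (c + nG - 1) / denom nG c else 0

def pagerank (s : ℕ) : ℝ :=
  if s < nL then lineRank nL nG j c s else if s = nL then hubRank nG c else cliqueRank nG c

variable {nL nG j c}

theorem link_nonneg (hnG : 1 ≤ nG) (r s : ℕ) : 0 ≤ link nL nG j r s := by
  have : (1 : ℝ) ≤ nG := by exact_mod_cast hnG
  unfold link
  split_ifs <;> positivity

theorem sum_link_row_of_lt_le_one {r : ℕ} (hr : r < nL) (m : ℕ) :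
    ∑ s ∈ range m, link nL nG j r s ≤ 1 := by
  have hrow : ∀ s, link nL nG j r s = if r = s + 1 then 1 else 0 := fun s => by
    simp only [link, if_pos hr]
  simp only [hrow]
  rcases r with _ | r
  · simp
  · simp only [Nat.add_right_cancel_iff, sum_ite_eq]
    split_ifs <;> norm_num

theorem sum_link_row_hub (hnG : 1 ≤ nG) (hj₁ : 1 ≤ j) (hj₂ : j ≤ nL) :
    ∑ s ∈ range (nL + nG), link nL nG j nL s = 1 := by
  obtain ⟨k, rfl⟩ : ∃ k, nG = k + 1 := ⟨nG - 1, by omega⟩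
  have hline : ∀ s ∈ range nL, link nL (k + 1) j nL s =
      if j - 1 = s then 1 / ((k + 1 : ℕ) : ℝ) else 0 := fun s hs => by
    have := mem_range.1 hs
    simp only [link, lt_irrefl, if_false, if_true]
    exact if_congr (by omega) rfl rfl
  have hself : link nL (k + 1) j nL nL = 0 := by
    simp only [link, lt_irrefl, if_false, if_true, or_false]
    exact if_neg (by omega)
  have hclique : ∀ t ∈ range k, link nL (k + 1) j nL (nL + 1 + t) = 1 / ((k + 1 : ℕ) : ℝ) :=
    fun t _ => by
      simp only [link, lt_irrefl, if_false, if_true]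
      exact if_pos (Or.inr (by omega))
  rw [sum_range_add_succ, sum_congr rfl hline, sum_ite_eq, if_pos (mem_range.2 (by omega)),
    hself, sum_congr rfl hclique, sum_const, card_range, nsmul_eq_mul]
  field_simp
  push_cast
  ring

theorem sum_link_row_of_lt_of_lt (hnG : 2 ≤ nG) {r : ℕ} (hr₁ : nL < r) (hr₂ : r < nL + nG) :
    ∑ s ∈ range (nL + nG), link nL nG j r s = 1 := by
  obtain ⟨k, rfl⟩ : ∃ k, nG = k + 1 + 1 := ⟨nG - 2, by omega⟩
  have hN : ((k + 1 + 1 : ℕ) : ℝ) - 1 = k + 1 := by push_cast; ring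
  have hline : ∀ s ∈ range nL, link nL (k + 1 + 1) j r s = 0 := fun s hs => by
    have := mem_range.1 hs
    simp only [link]
    split_ifs <;> first | rfl | omega
  have hhub : link nL (k + 1 + 1) j r nL = 1 / ((k : ℝ) + 1) := by
    simp only [link, hN]
    split_ifs <;> first | rfl | omega
  have hclique : ∀ t ∈ range (k + 1), link nL (k + 1 + 1) j r (nL + 1 + t) =
      1 / ((k : ℝ) + 1) - if t = r - nL - 1 then 1 / ((k : ℝ) + 1) else 0 := fun t _ => by
    simp only [link, hN]
    split_ifs <;> first | omega | simp
  rw [sum_range_add_succ, sum_congr rfl hline, sum_const_zero, hhub, sum_congr rfl hclique,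
    sum_sub_distrib, sum_ite_eq', if_pos (mem_range.2 (by omega)), sum_const, card_range,
    nsmul_eq_mul]
  push_cast
  field_simp
  ring

theorem sum_link_row_le_one (hnG : 2 ≤ nG) (hj₁ : 1 ≤ j) (hj₂ : j ≤ nL) {r : ℕ}
    (hr : r < nL + nG) : ∑ s ∈ range (nL + nG), link nL nG j r s ≤ 1 := by
  rcases lt_trichotomy r nL with hr' | rfl | hr'
  · exact sum_link_row_of_lt_le_one hr' _
  · exact (sum_link_row_hub (by omega) hj₁ hj₂).le
  · exact (sum_link_row_of_lt_of_lt hnG hr' hr).le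

theorem sum_link_col_mul_of_lt (hnG : 1 ≤ nG) {p : ℕ} (hp : p < nL) (f : ℕ → ℝ) :
    ∑ s ∈ range (nL + nG), link nL nG j s p * f s =
      (if p + 1 < nL then f (p + 1) else 0) + if p + 1 = j then f nL / nG else 0 := by
  obtain ⟨k, rfl⟩ : ∃ k, nG = k + 1 := ⟨nG - 1, by omega⟩
  have hline : ∀ s ∈ range nL, link nL (k + 1) j s p * f s = if p + 1 = s then f s else 0 :=
    fun s hs => by
      simp only [link, if_pos (mem_range.1 hs)]
      split_ifs <;> first | omega | simp
  have hhub : link nL (k + 1) j nL p * f nL = if p + 1 = j then f nL / (k + 1 : ℕ) else 0 := by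
    simp only [link, lt_irrefl, if_true, if_false]
    split_ifs <;> first | omega | ring
  have hclique : ∀ t ∈ range k, link nL (k + 1) j (nL + 1 + t) p * f (nL + 1 + t) = 0 :=
    fun t _ => by
      simp only [link]
      split_ifs <;> first | omega | simp
  rw [sum_range_add_succ, sum_congr rfl hline, sum_ite_eq, hhub, sum_congr rfl hclique,
    sum_const_zero, add_zero]
  simp only [mem_range]

theorem sum_link_col_mul_hub (hnG : 2 ≤ nG) (hj : j ≤ nL) {f : ℕ → ℝ} {x : ℝ}
    (hf : ∀ s, nL < s → f s = x) :
    ∑ s ∈ range (nL + nG), link nL nG j s nL * f s = x := by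
  obtain ⟨k, rfl⟩ : ∃ k, nG = k + 1 + 1 := ⟨nG - 2, by omega⟩
  have hline : ∀ s ∈ range nL, link nL (k + 1 + 1) j s nL * f s = 0 := fun s hs => by
    have := mem_range.1 hs
    simp only [link, if_pos this]
    split_ifs <;> first | omega | simp
  have hhub : link nL (k + 1 + 1) j nL nL = 0 := by
    simp only [link]
    split_ifs <;> first | omega | rfl
  have hclique : ∀ t ∈ range (k + 1), link nL (k + 1 + 1) j (nL + 1 + t) nL * f (nL + 1 + t) =
      x / (k + 1) := fun t _ => by
    simp only [link, hf (nL + 1 + t) (by omega)]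
    split_ifs <;> first | omega | (push_cast; ring)
  rw [sum_range_add_succ, sum_congr rfl hline, sum_const_zero, hhub, zero_mul,
    sum_congr rfl hclique, sum_const, card_range, nsmul_eq_mul]
  push_cast
  field_simp
  ring

theorem sum_link_col_mul_of_lt_of_lt (hnG : 2 ≤ nG) {f : ℕ → ℝ} {x : ℝ}
    (hf : ∀ s, nL < s → f s = x) {p : ℕ} (hp₁ : nL < p) (hp₂ : p < nL + nG) :
    ∑ s ∈ range (nL + nG), link nL nG j s p * f s = f nL / nG + (nG - 2) / (nG - 1) * x := by
  obtain ⟨k, rfl⟩ : ∃ k, nG = k + 1 + 1 := ⟨nG - 2, by omega⟩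
  have hline : ∀ s ∈ range nL, link nL (k + 1 + 1) j s p * f s = 0 := fun s hs => by
    have := mem_range.1 hs
    simp only [link, if_pos this]
    split_ifs <;> first | omega | simp
  have hhub : link nL (k + 1 + 1) j nL p = 1 / (k + 1 + 1 : ℕ) := by
    simp only [link]
    split_ifs <;> first | omega | rfl
  have hclique : ∀ t ∈ range (k + 1), link nL (k + 1 + 1) j (nL + 1 + t) p * f (nL + 1 + t) =
      x / (k + 1) - if t = p - nL - 1 then x / (k + 1) else 0 := fun t _ => by
    simp only [link, hf (nL + 1 + t) (by omega)]
    split_ifs <;> first | omega | (push_cast; ring)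
  rw [sum_range_add_succ, sum_congr rfl hline, sum_const_zero, hhub, sum_congr rfl hclique,
    sum_sub_distrib, sum_ite_eq', if_pos (mem_range.2 (by omega)), sum_const, card_range,
    nsmul_eq_mul]
  push_cast
  field_simp
  ring

theorem denom_pos (hnG : 2 ≤ nG) (hc₀ : 0 ≤ c) (hc₁ : c < 1) : 0 < denom nG c := by
  obtain ⟨m, rfl⟩ : ∃ m, nG = m + 2 := ⟨nG - 2, by omega⟩
  have hm : (0 : ℝ) ≤ m := m.cast_nonneg
  have hdenom : denom (m + 2) c = (m + 1) * (1 - c ^ 2) + (m ^ 2 + 2 * m) * (1 - c) + 1 := by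
    simp only [denom]; push_cast; ring
  rw [hdenom]
  have : 0 ≤ 1 - c ^ 2 := by nlinarith
  positivity

theorem hubRank_sub_mul_cliqueRank (hD : denom nG c ≠ 0) :
    hubRank nG c - c * cliqueRank nG c = 1 := by
  simp only [hubRank, cliqueRank]
  field_simp
  simp only [denom]
  ring

theorem cliqueRank_sub_mul (hD : denom nG c ≠ 0) (hnG₀ : (nG : ℝ) ≠ 0)
    (hnG₁ : (nG : ℝ) - 1 ≠ 0) :
    cliqueRank nG c - c * (hubRank nG c / nG + (nG - 2) / (nG - 1) * cliqueRank nG c) = 1 := by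
  simp only [hubRank, cliqueRank]
  field_simp
  simp only [denom]
  ring

theorem lineRank_self (hj : j ≤ nL) : lineRank nL nG j c nL = 0 := by
  simp [lineRank, show ¬nL + 1 ≤ j by omega]

theorem lineRank_sub_mul_succ (hc : c ≠ 1) (hnG : (nG : ℝ) ≠ 0) {p : ℕ} (hp : p < nL) :
    lineRank nL nG j c p -
      c * (lineRank nL nG j c (p + 1) + if p + 1 = j then hubRank nG c / nG else 0) = 1 := by
  have h1c : 1 - c ≠ 0 := sub_ne_zero.2 hc.symm
  have hhub : hubRank nG c / nG = (c + nG - 1) / denom nG c := by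
    simp only [hubRank]; field_simp; ring
  have hgeom : nL - p = nL - (p + 1) + 1 := by omega
  simp only [lineRank, hhub, hgeom, pow_succ]
  rcases lt_trichotomy (p + 1) j with h | rfl | h
  · have hboost : j - p = j - (p + 1) + 1 := by omega
    rw [if_pos h.le, if_pos (show p + 1 + 1 ≤ j from h), if_neg h.ne, hboost, pow_succ]
    field_simp
    ring
  · rw [if_pos le_rfl, if_neg (by omega), if_pos rfl, show p + 1 - p = 1 by omega, pow_one]
    field_simp
    ring
  · rw [if_neg (by omega), if_neg (by omega), if_neg h.ne']
    field_simp
    ring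

theorem pagerank_sub_mul_sum_link (hnG : 2 ≤ nG) (hj : j ≤ nL) (hc₀ : 0 ≤ c) (hc₁ : c < 1)
    {p : ℕ} (hp : p < nL + nG) :
    pagerank nL nG j c p -
      c * ∑ s ∈ range (nL + nG), link nL nG j s p * pagerank nL nG j c s = 1 := by
  have hD : denom nG c ≠ 0 := (denom_pos hnG hc₀ hc₁).ne'
  have hnG' : (2 : ℝ) ≤ nG := by exact_mod_cast hnG
  have hhub : pagerank nL nG j c nL = hubRank nG c := by simp [pagerank]
  have hclique : ∀ s, nL < s → pagerank nL nG j c s = cliqueRank nG c := fun s hs => by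
    simp [pagerank, hs.not_gt, hs.ne']
  rcases lt_trichotomy p nL with hp' | rfl | hp'
  · have hsucc : (if p + 1 < nL then pagerank nL nG j c (p + 1) else 0) =
        lineRank nL nG j c (p + 1) := by
      split_ifs with h
      · simp [pagerank, h]
      · rw [show p + 1 = nL by omega, lineRank_self hj]
    rw [sum_link_col_mul_of_lt (by omega) hp', hsucc, hhub]
    simpa [pagerank, hp'] using lineRank_sub_mul_succ hc₁.ne (by positivity) hp'
  · rw [sum_link_col_mul_hub hnG hj hclique, hhub]
    exact hubRank_sub_mul_cliqueRank hD
  · rw [sum_link_col_mul_of_lt_of_lt hnG hclique hp' hp, hhub, hclique p hp']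
    exact cliqueRank_sub_mul hD (by positivity) (by linarith)

end LineCompleteGraph

end

open LineCompleteGraph

theorem complete_graph_links_to_line_pagerank_general (nL nG : ℕ)
    (hnG : 2 ≤ nG) (j : ℕ) (hj1 : 1 ≤ j) (hj2 : j ≤ nL)
    (c : ℝ) (hc0 : 0 < c) (hc1 : c < 1)
    (A : Matrix (Fin (nL + nG)) (Fin (nL + nG)) ℝ)
    (hA : ∀ r s : Fin (nL + nG), A r s =
      if (r : ℕ) < nL then (if (r : ℕ) = (s : ℕ) + 1 then 1 else 0)
      else if (r : ℕ) = nL then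
        (if (s : ℕ) + 1 = j ∨ nL < (s : ℕ) then 1 / (nG : ℝ) else 0)
      else (if nL ≤ (s : ℕ) ∧ s ≠ r then 1 / ((nG : ℝ) - 1) else 0))
    (R : Fin (nL + nG) → ℝ)
    (hR : R = (1 - c • A.transpose)⁻¹ *ᵥ fun _ => 1)
    (D : ℝ)
    (hD : D = (nG : ℝ) * ((nG : ℝ) - 1) - ((nG : ℝ) - 1) * c ^ 2 -
      (nG : ℝ) * ((nG : ℝ) - 2) * c) :
    (∀ i : Fin (nL + nG), (i : ℕ) < nL →
        R i = (1 - c ^ (nL - (i : ℕ))) / (1 - c) +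
          (if (i : ℕ) + 1 ≤ j then
            c ^ (j - (i : ℕ)) * (c + (nG : ℝ) - 1) / D else 0)) ∧
    (∀ i : Fin (nL + nG), (i : ℕ) = nL →
        R i = ((nG : ℝ) * ((nG : ℝ) - 1) + (nG : ℝ) * c) / D) ∧
    (∀ i : Fin (nL + nG), nL < (i : ℕ) →
        R i = ((c + (nG : ℝ)) * ((nG : ℝ) - 1)) / D) := by
  have hlink : ∀ r s : Fin (nL + nG), A r s = link nL nG j r s := fun r s => by
    simp only [hA, link, Ne, Fin.ext_iff]
  have hdet : (1 - c • Aᵀ).det ≠ 0 := by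
    refine det_one_sub_smul_transpose_ne_zero A
      (fun r s => hlink r s ▸ link_nonneg (by omega) r s) (fun r => ?_) hc0.le hc1
    simpa only [hlink] using (Fin.sum_univ_eq_sum_range (link nL nG j r) _).trans_le
      (sum_link_row_le_one hnG hj1 hj2 r.isLt)
  have hbalance : (1 - c • Aᵀ) *ᵥ (fun i : Fin (nL + nG) => pagerank nL nG j c i) =
      fun _ => 1 := funext fun p => by
    rw [one_sub_smul_transpose_mulVec_apply]
    simp only [hlink]
    rw [Fin.sum_univ_eq_sum_range (fun s => link nL nG j s p * pagerank nL nG j c s)]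
    exact pagerank_sub_mul_sum_link hnG hj2 hc0.le hc1 p.isLt
  have hRrank : R = fun i : Fin (nL + nG) => pagerank nL nG j c i := by
    rw [hR, ← hbalance, mulVec_mulVec, nonsing_inv_mul _ (isUnit_iff_ne_zero.2 hdet), one_mulVec]
  subst hRrank hD
  refine ⟨fun i hi => ?_, fun i hi => ?_, fun i hi => ?_⟩
  · simp [pagerank, lineRank, denom, hi]
  · simp [pagerank, hubRank, denom, hi]
  · simp [pagerank, cliqueRank, denom, hi.not_gt, hi.ne']

/-- A simple line on `nL` nodes (indices `0,…,nL-1`) together with a complete graph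
on `nG ≥ 2` nodes (indices `nL,…,nL+nG-1`), where graph node `1` (index `nL`)
additionally links to line node `j` (so it has `nG` links of weight `1/nG`):
formulas for the non-normalized PageRank of every node. -/
theorem complete_graph_links_to_line_pagerank (nL nG : ℕ) (hnL : 1 ≤ nL)
    (hnG : 2 ≤ nG) (j : ℕ) (hj1 : 1 ≤ j) (hj2 : j ≤ nL)
    (c : ℝ) (hc0 : 0 < c) (hc1 : c < 1)
    (A : Matrix (Fin (nL + nG)) (Fin (nL + nG)) ℝ)
    (hA : ∀ r s : Fin (nL + nG), A r s =
      if (r : ℕ) < nL then (if (r : ℕ) = (s : ℕ) + 1 then 1 else 0)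
      else if (r : ℕ) = nL then
        (if (s : ℕ) + 1 = j ∨ nL < (s : ℕ) then 1 / (nG : ℝ) else 0)
      else (if nL ≤ (s : ℕ) ∧ s ≠ r then 1 / ((nG : ℝ) - 1) else 0))
    (R : Fin (nL + nG) → ℝ)
    (hR : R = (1 - c • A.transpose)⁻¹ *ᵥ fun _ => 1)
    (D : ℝ)
    (hD : D = (nG : ℝ) * ((nG : ℝ) - 1) - ((nG : ℝ) - 1) * c ^ 2 -
      (nG : ℝ) * ((nG : ℝ) - 2) * c) :
    (∀ i : Fin (nL + nG), (i : ℕ) < nL →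
        R i = (1 - c ^ (nL - (i : ℕ))) / (1 - c) +
          (if (i : ℕ) + 1 ≤ j then
            c ^ (j - (i : ℕ)) * (c + (nG : ℝ) - 1) / D else 0)) ∧
    (∀ i : Fin (nL + nG), (i : ℕ) = nL →
        R i = ((nG : ℝ) * ((nG : ℝ) - 1) + (nG : ℝ) * c) / D) ∧
    (∀ i : Fin (nL + nG), nL < (i : ℕ) →
        R i = ((c + (nG : ℝ)) * ((nG : ℝ) - 1)) / D) :=
  complete_graph_links_to_line_pagerank_general nL nG hnG j hj1 hj2 c hc0 hc1 A hA R hR D hD
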